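/- arXiv:1705.00610 — 2 statements merged into one kernel-verified Lean document; each statement's English description precedes it below -/
import Mathlib

section
/- Identify ℝ^{3,1} with the real subspace V := {q ∈ H^C : q = -hat(conj(q))} = {i·x1·1 + x2·I + x3·J + x4·K : xi ∈ ℝ}. Then for every p ∈ Spin(3,1) and every q ∈ V, the element p·q·(hat(p))⁻¹ again lies in V and satisfies H(p·q·(hat(p))⁻¹, p·q·(hat(p))⁻¹) = H(q,q). In particular, q ↦ p·q·(hat(p))⁻¹ defines a Minkowski isometry of V, since for q = i·x1 + x2I + x3J + x4K one has H(q,q) = -x1² + x2² + x3² + x4². -/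
/-! `conjQ` is Mathlib's quaternion `star`, an anti-automorphism, and `hatQ` is a ring involution
commuting with it. Hence `hatQ (star (p * q * star (hatQ p))) = p * hatQ (star q) * star (hatQ p)`,
so the action preserves the fixed points `V` of `q ↦ -hatQ (star q)`. On the diagonal `Hform` is the
multiplicative `normSq`, and `normSq (hatQ p)` is the complex conjugate of `normSq p = 1`. -/

open Quaternion

noncomputable section

/-- The "hat" involution on complexified quaternions: complex-conjugate each coefficient. -/
def hatQ (q : ℍ[ℂ]) : ℍ[ℂ] :=
  ⟨(starRingEnd ℂ) q.re, (starRingEnd ℂ) q.imI, (starRingEnd ℂ) q.imJ, (starRingEnd ℂ) q.imK⟩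

/-- Quaternionic conjugation: negate the I, J, K components. -/
def conjQ (q : ℍ[ℂ]) : ℍ[ℂ] := ⟨q.re, -q.imI, -q.imJ, -q.imK⟩

/-- The complex bilinear form H(q,q') = q1q1' + q2q2' + q3q3' + q4q4'. -/
def Hform (p q : ℍ[ℂ]) : ℂ := p.re * q.re + p.imI * q.imI + p.imJ * q.imJ + p.imK * q.imK

def Iq : ℍ[ℂ] := ⟨0,1,0,0⟩
def Jq : ℍ[ℂ] := ⟨0,0,1,0⟩
def Kq : ℍ[ℂ] := ⟨0,0,0,1⟩

lemma conjQ_eq_star (q : ℍ[ℂ]) : conjQ q = star q := by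
  ext <;> simp [conjQ]

lemma Hform_self_eq_normSq (q : ℍ[ℂ]) : Hform q q = normSq q := by
  rw [normSq_def', Hform]
  ring

lemma Hform_minkowski (x1 x2 x3 x4 : ℝ) :
    Hform (⟨(x1:ℂ) * Complex.I, (x2:ℂ), (x3:ℂ), (x4:ℂ)⟩ : ℍ[ℂ])
          (⟨(x1:ℂ) * Complex.I, (x2:ℂ), (x3:ℂ), (x4:ℂ)⟩ : ℍ[ℂ])
      = -(x1:ℂ)^2 + (x2:ℂ)^2 + (x3:ℂ)^2 + (x4:ℂ)^2 := by
  simp only [Hform]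
  linear_combination (x1:ℂ)^2 * Complex.I_sq

namespace Quaternion

@[simp] lemma re_hatQ (q : ℍ[ℂ]) : (hatQ q).re = starRingEnd ℂ q.re := rfl
@[simp] lemma imI_hatQ (q : ℍ[ℂ]) : (hatQ q).imI = starRingEnd ℂ q.imI := rfl
@[simp] lemma imJ_hatQ (q : ℍ[ℂ]) : (hatQ q).imJ = starRingEnd ℂ q.imJ := rfl
@[simp] lemma imK_hatQ (q : ℍ[ℂ]) : (hatQ q).imK = starRingEnd ℂ q.imK := rfl

lemma hatQ_hatQ (q : ℍ[ℂ]) : hatQ (hatQ q) = q := by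
  ext <;> simp

lemma hatQ_mul (p q : ℍ[ℂ]) : hatQ (p * q) = hatQ p * hatQ q := by
  ext <;> simp

lemma hatQ_star (q : ℍ[ℂ]) : hatQ (star q) = star (hatQ q) := by
  ext <;> simp

lemma normSq_hatQ (q : ℍ[ℂ]) : normSq (hatQ q) = starRingEnd ℂ (normSq q) := by
  simp [normSq_def']

theorem mul_mul_star_hatQ_eq_neg_hatQ_star {p q : ℍ[ℂ]} (hq : q = -hatQ (star q)) :
    p * q * star (hatQ p) = -hatQ (star (p * q * star (hatQ p))) := by
  have : hatQ (star (p * q * star (hatQ p))) = p * hatQ (star q) * star (hatQ p) := by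
    simp only [star_mul, star_star, hatQ_mul, hatQ_star, hatQ_hatQ, mul_assoc]
  rw [this, ← neg_eq_iff_eq_neg.mpr hq, mul_neg, neg_mul, neg_neg]

theorem normSq_mul_mul_star_hatQ (p q : ℍ[ℂ]) :
    normSq (p * q * star (hatQ p)) = normSq p * normSq q * starRingEnd ℂ (normSq p) := by
  rw [map_mul, map_mul, normSq_star, normSq_hatQ, mul_right_comm]

end Quaternion

theorem spin_action_preserves_minkowski (p : ℍ[ℂ]) (hp : Hform p p = 1)
    (q : ℍ[ℂ]) (hq : q = -hatQ (conjQ q)) :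
    (p * q * conjQ (hatQ p) = -hatQ (conjQ (p * q * conjQ (hatQ p)))) ∧
    Hform (p * q * conjQ (hatQ p)) (p * q * conjQ (hatQ p)) = Hform q q ∧
    (∀ x1 x2 x3 x4 : ℝ,
      Hform (⟨(x1:ℂ) * Complex.I, (x2:ℂ), (x3:ℂ), (x4:ℂ)⟩ : ℍ[ℂ])
            (⟨(x1:ℂ) * Complex.I, (x2:ℂ), (x3:ℂ), (x4:ℂ)⟩ : ℍ[ℂ])
        = -(x1:ℂ)^2 + (x2:ℂ)^2 + (x3:ℂ)^2 + (x4:ℂ)^2) := by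
  simp only [conjQ_eq_star, Hform_self_eq_normSq] at hq hp ⊢
  refine ⟨mul_mul_star_hatQ_eq_neg_hatQ_star hq, ?_, Hform_minkowski⟩
  rw [normSq_mul_mul_star_hatQ, hp, map_one, one_mul, mul_one]
end
end

section
/- For every g ∈ Spin(3,1), the four elements g, iI·g, K·g, iJ·g of H^C are pairwise H-orthogonal, and their H-norms are H(g,g) = 1, H(iIg, iIg) = -1, H(Kg, Kg) = 1, H(iJg, iJg) = -1. -/
open Quaternion

noncomputable section

/-!
`Hform` is the polarization of the quaternionic norm, `H(p, q) = Re (p q̄)`. Hence right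
multiplication by `g` scales `H` by `H(g, g) = 1`, and the claim reduces to the frame
`1, iI, K, iJ` being orthonormal for `H` with signature `(+, -, +, -)`.
-/

theorem Hform_eq_re_mul_star (p q : ℍ[ℂ]) : Hform p q = (p * star q).re := by
  simp only [Hform, re_mul, re_star, imI_star, imJ_star, imK_star]
  ring

theorem Hform_smul_left (c : ℂ) (p q : ℍ[ℂ]) : Hform (c • p) q = c * Hform p q := by
  simp only [Hform, re_smul, imI_smul, imJ_smul, imK_smul, smul_eq_mul]
  ring

theorem Hform_smul_right (c : ℂ) (p q : ℍ[ℂ]) : Hform p (c • q) = c * Hform p q := by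
  simp only [Hform, re_smul, imI_smul, imJ_smul, imK_smul, smul_eq_mul]
  ring

theorem Hform_mul_right (u v g : ℍ[ℂ]) : Hform (u * g) (v * g) = Hform u v * Hform g g := by
  have hg : g * star g = (Hform g g : ℍ[ℂ]) := by
    rw [self_mul_star, Hform_eq_re_mul_star, normSq_def]
  calc Hform (u * g) (v * g) = (u * (g * star g) * star v).re := by
        rw [Hform_eq_re_mul_star, star_mul]
        simp only [mul_assoc]
    _ = Hform u v * Hform g g := by
        rw [hg, ← coe_commutes, mul_assoc, coe_mul_eq_smul, re_smul, smul_eq_mul,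
          Hform_eq_re_mul_star u v, mul_comm]

theorem H_orthonormal_frame (g : ℍ[ℂ]) (hg : Hform g g = 1) :
    Hform g (Complex.I • Iq * g) = 0 ∧
    Hform g (Kq * g) = 0 ∧
    Hform g (Complex.I • Jq * g) = 0 ∧
    Hform (Complex.I • Iq * g) (Kq * g) = 0 ∧
    Hform (Complex.I • Iq * g) (Complex.I • Jq * g) = 0 ∧
    Hform (Kq * g) (Complex.I • Jq * g) = 0 ∧
    Hform g g = 1 ∧
    Hform (Complex.I • Iq * g) (Complex.I • Iq * g) = -1 ∧
    Hform (Kq * g) (Kq * g) = 1 ∧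
    Hform (Complex.I • Jq * g) (Complex.I • Jq * g) = -1 := by
  have hmul (u v : ℍ[ℂ]) : Hform (u * g) (v * g) = Hform u v := by
    rw [Hform_mul_right, hg, mul_one]
  have hleft (v : ℍ[ℂ]) : Hform g (v * g) = Hform 1 v := by
    simpa only [one_mul] using hmul 1 v
  simp only [hmul, hleft, hg, Hform_smul_left, Hform_smul_right]
  simp [Hform, Iq, Jq, Kq]
end
end
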